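/- arXiv:2305.15560 — 3 statements merged into one kernel-verified Lean document; each statement's English description precedes it below -/
import Mathlib

section
/- Let d ≥ 1 and L ≥ 2 be integers with log L ≤ 2d. Let x, z ∈ ℝ^d with s := ‖x − z‖ > 0, and let σ > 0 satisfy (s·√(log L))/(2d) ≤ σ ≤ (s·√(log L))/d. Let w₁, …, w_L ∈ ℝ^d be (deterministic) vectors such that ‖w_i‖² ≤ 3d/2 for every i, and such that max over i of ⟨x − z, w_i⟩ ≥ s·√(log L). Then min over i ∈ {1,…,L} of ‖x − (z + σ·w_i)‖ is at most (1 − (log L)/(4d))·s. -/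
open scoped RealInnerProductSpace

lemma aux_sqrt_ineq (D s u : ℝ) (hD : 0 < D) (hu : 0 ≤ u) :
    s ^ 2 - s ^ 2 * u / (2 * D) ≤ ((1 - u / (4 * D)) * s) ^ 2 := by
  have h : ((1 - u / (4 * D)) * s) ^ 2 - (s ^ 2 - s ^ 2 * u / (2 * D))
      = (s * u / (4 * D)) ^ 2 := by field_simp; ring
  nlinarith [sq_nonneg (s * u / (4 * D))]

/-- Deterministic core of the one-step improvement claim: if all perturbation vectors
`w i` have squared norm at most `3d/2` and some `w i` has inner product at least
`s·√(log L)` with `x - z`, then one of the perturbed points `z + σ • w i` is closer to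
`x` than `z` by the factor `(1 - log L / (4d))`. -/
theorem one_step_improvement_deterministic
    (d L : ℕ) (hd : 1 ≤ d) (hL : 2 ≤ L) (hLd : Real.log L ≤ 2 * d)
    (x z : EuclideanSpace ℝ (Fin d)) (s : ℝ) (hs : s = ‖x - z‖) (hs0 : 0 < s)
    (σ : ℝ) (hσ0 : 0 < σ)
    (hσl : s * Real.sqrt (Real.log L) / (2 * d) ≤ σ)
    (hσu : σ ≤ s * Real.sqrt (Real.log L) / d)
    (w : Fin L → EuclideanSpace ℝ (Fin d))
    (hw : ∀ i, ‖w i‖ ^ 2 ≤ 3 * d / 2)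
    (hmax : s * Real.sqrt (Real.log L) ≤ ⨆ i : Fin L, ⟪x - z, w i⟫) :
    (⨅ i : Fin L, ‖x - (z + σ • w i)‖) ≤ (1 - Real.log L / (4 * d)) * s := by
  have hne : Nonempty (Fin L) := ⟨⟨0, by omega⟩⟩
  have hdd : (1 : ℝ) ≤ (d : ℝ) := by exact_mod_cast hd
  have hd0 : (0 : ℝ) < (d : ℝ) := by linarith
  have hlog0 : 0 < Real.log L := by
    apply Real.log_pos; exact_mod_cast (by omega : (1:ℕ) < L)
  set t := Real.sqrt (Real.log L) with htdef
  have ht2 : t ^ 2 = Real.log L := Real.sq_sqrt hlog0.le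
  have ht0 : 0 < t := Real.sqrt_pos.mpr hlog0
  -- attain the sup
  obtain ⟨i, hi⟩ := Finite.exists_max (fun i : Fin L => ⟪x - z, w i⟫)
  have hsup : (⨆ j : Fin L, ⟪x - z, w j⟫) ≤ ⟪x - z, w i⟫ := ciSup_le hi
  have hinner : s * t ≤ ⟪x - z, w i⟫ := le_trans hmax hsup
  -- expand the norm
  have hexp : ‖x - (z + σ • w i)‖ ^ 2
      = s ^ 2 - 2 * σ * ⟪x - z, w i⟫ + σ ^ 2 * ‖w i‖ ^ 2 := by
    have h1 : x - (z + σ • w i) = (x - z) - σ • w i := by abel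
    have h2 := norm_sub_sq_real (x - z) (σ • w i)
    rw [h1, h2, real_inner_smul_right, norm_smul, hs]
    simp only [mul_pow, Real.norm_eq_abs, sq_abs]
    ring
  have hb : (0:ℝ) ≤ 1 - Real.log L / (4 * d) := by
    rw [sub_nonneg, div_le_one (by linarith)]
    linarith
  -- key quadratic bound
  have hσl' : s * t / (2 * d) ≤ σ := hσl
  have hσu' : σ ≤ s * t / d := hσu
  have hl2 : s * t ≤ 2 * d * σ := by
    rw [div_le_iff₀ (by linarith)] at hσl'; linarith
  have hu2 : d * σ ≤ s * t := by
    rw [le_div_iff₀ hd0] at hσu'; linarith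
  have hkey : ‖x - (z + σ • w i)‖ ^ 2 ≤ ((1 - Real.log L / (4 * d)) * s) ^ 2 := by
    rw [hexp]
    have hw' : σ ^ 2 * ‖w i‖ ^ 2 ≤ σ ^ 2 * (3 * d / 2) :=
      mul_le_mul_of_nonneg_left (hw i) (sq_nonneg σ)
    have hfac : (3 * (d:ℝ) * σ - s * t) * ((d:ℝ) * σ - s * t) ≤ 0 :=
      mul_nonpos_of_nonneg_of_nonpos (by nlinarith) (by linarith)
    have hquad : s^2 * t^2 / (2 * d) ≤ 2 * σ * (s * t) - σ ^ 2 * (3 * d / 2) := by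
      rw [div_le_iff₀ (by linarith : (0:ℝ) < 2 * d)]
      nlinarith [hfac]
    have h2 : s ^ 2 - 2 * σ * ⟪x - z, w i⟫ + σ ^ 2 * ‖w i‖ ^ 2
        ≤ s ^ 2 - (s^2 * t^2) / (2 * d) := by
      have : 2 * σ * (s * t) ≤ 2 * σ * ⟪x - z, w i⟫ :=
        mul_le_mul_of_nonneg_left hinner (by linarith)
      linarith
    have h3 : s ^ 2 - (s^2 * t^2) / (2 * d) ≤ ((1 - Real.log L / (4 * d)) * s) ^ 2 := by
      rw [ht2]
      linarith [aux_sqrt_ineq d s (Real.log L) hd0 hlog0.le]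
    linarith
  have hnorm : ‖x - (z + σ • w i)‖ ≤ (1 - Real.log L / (4 * d)) * s := by
    have := Real.sqrt_le_sqrt hkey
    rwa [Real.sqrt_sq (norm_nonneg _), Real.sqrt_sq (by positivity)] at this
  refine le_trans ?_ hnorm
  exact ciInf_le (Finite.bddBelow_range _) i
end

section
/- Let (Ω, F, P) be a probability space with a filtration (F_t) for t = 0, 1, …, T, and let (D_t)_{t=0}^{T} be an adapted process of nonnegative real random variables. Let D > 0, η > 0, and γ ∈ (0, 1) be such that: D_0 ≤ D almost surely; D_{t+1} ≤ D_t almost surely for every t < T; for every t < T, the conditional probability P[D_{t+1} ≤ max((1−γ)·D_t, η) | F_t] ≥ 1/2 almost surely; and (1 − γ)^{⌈T/4⌉}·D ≤ η. Then P[D_T > η] ≤ exp(−T/16). -/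
open MeasureTheory ProbabilityTheory
open scoped ENNReal

/-!
Let `N_t` count the steps `s < t` at which `D` contracted. Since `D` never increases and a
contraction step multiplies it by `1 - γ` unless it lands below `η`, the event `η < D_T` forces
`N_T < ⌈T/4⌉`. The conditional probability bound gives `E[2^{-N_{t+1}}] ≤ (3/4) E[2^{-N_t}]`,
hence `E[2^{-N_T}] ≤ (3/4)^T`, and Markov's inequality bounds `P[N_T < ⌈T/4⌉]` by
`2^{⌈T/4⌉ - 1} (3/4)^T ≤ exp(-T/16)`.
-/

open Finset

noncomputable def hitCount {Ω : Type*} (A : ℕ → Set Ω) (n : ℕ) (ω : Ω) : ℕ :=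
  ∑ t ∈ range n, (A t).indicator 1 ω

def contractionSet {Ω : Type*} (D : ℕ → Ω → ℝ) (a η : ℝ) (t : ℕ) : Set Ω :=
  {ω | D (t + 1) ω ≤ max (a * D t ω) η}

section hitCount

variable {Ω : Type*} {A : ℕ → Set Ω}

lemma hitCount_succ (n : ℕ) (ω : Ω) :
    hitCount A (n + 1) ω = hitCount A n ω + (A n).indicator 1 ω :=
  sum_range_succ _ _

lemma pow_hitCount_succ (r : ℝ) (n : ℕ) (ω : Ω) :
    r ^ hitCount A (n + 1) ω
      = r ^ hitCount A n ω - (1 - r) * (A n).indicator (r ^ hitCount A n ·) ω := by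
  rw [hitCount_succ]
  by_cases h : ω ∈ A n <;> simp [h, pow_succ]
  ring

lemma measurable_hitCount {m : MeasurableSpace Ω} {n : ℕ} (hA : ∀ t < n, MeasurableSet (A t)) :
    Measurable (hitCount A n) :=
  Finset.measurable_sum _ fun t ht => measurable_const.indicator (hA t (mem_range.1 ht))

end hitCount

section contraction

variable {Ω : Type*} {D : ℕ → Ω → ℝ} {a η B : ℝ} {n : ℕ} {ω : Ω}

lemma le_max_pow_mul_hitCount (ha0 : 0 ≤ a) (ha1 : a ≤ 1) (hη : 0 ≤ η)
    (h0 : D 0 ω ≤ B) (hmono : ∀ t < n, D (t + 1) ω ≤ D t ω) :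
    D n ω ≤ max (a ^ hitCount (contractionSet D a η) n ω * B) η := by
  induction n with
  | zero => simpa [hitCount] using Or.inl h0
  | succ n ih =>
    have ih := ih fun t ht => hmono t (by omega)
    rw [hitCount_succ]
    by_cases h : ω ∈ contractionSet D a η n
    · rw [Set.indicator_of_mem h, Pi.one_apply, pow_succ']
      calc D (n + 1) ω ≤ max (a * D n ω) η := h
        _ ≤ max (a * max (a ^ hitCount (contractionSet D a η) n ω * B) η) η := by gcongr
        _ ≤ max (a * (a ^ hitCount (contractionSet D a η) n ω * B)) η := by
          rw [mul_max_of_nonneg _ _ ha0, max_assoc, max_eq_right (mul_le_of_le_one_left hη ha1)]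
        _ = _ := by rw [mul_assoc]
    · rw [Set.indicator_of_notMem h, add_zero]
      exact (hmono n (by omega)).trans ih

lemma hitCount_contractionSet_lt (ha0 : 0 < a) (ha1 : a < 1) (hη : 0 ≤ η) {k : ℕ}
    (hk : a ^ k * B ≤ η) (h0 : D 0 ω ≤ B) (hmono : ∀ t < n, D (t + 1) ω ≤ D t ω) (hn : η < D n ω) :
    hitCount (contractionSet D a η) n ω < k := by
  have hD := hn.trans_le (le_max_pow_mul_hitCount ha0.le ha1.le hη h0 hmono)
  have hlarge : η < a ^ hitCount (contractionSet D a η) n ω * B :=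
    (lt_max_iff.1 hD).resolve_right (lt_irrefl η)
  have hB : 0 < B := pos_of_mul_pos_right (hη.trans_lt hlarge) (by positivity)
  exact (pow_lt_pow_iff_right_of_lt_one₀ ha0 ha1).1
    (lt_of_mul_lt_mul_right (hk.trans_lt hlarge) hB.le)

end contraction

lemma mul_integral_le_setIntegral_of_le_condExp_indicator {Ω : Type*} {m m₀ : MeasurableSpace Ω}
    {P : Measure Ω} [IsFiniteMeasure P] (hm : m ≤ m₀) {W : Ω → ℝ} (hW : StronglyMeasurable[m] W)
    (hWi : Integrable W P) (hW0 : 0 ≤ W) {s : Set Ω} (hs : MeasurableSet s) {p : ℝ}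
    (hp : ∀ᵐ ω ∂P, p ≤ P[s.indicator 1 | m] ω) :
    p * ∫ ω, W ω ∂P ≤ ∫ ω in s, W ω ∂P := by
  have hWs : W * s.indicator 1 = s.indicator W := by
    ext ω
    by_cases h : ω ∈ s <;> simp [h]
  have hpull : P[W * s.indicator 1 | m] =ᵐ[P] W * P[s.indicator 1 | m] :=
    condExp_mul_of_stronglyMeasurable_left hW (hWs ▸ hWi.indicator hs)
      ((integrable_const 1).indicator hs)
  calc p * ∫ ω, W ω ∂P = ∫ ω, p * W ω ∂P := (integral_const_mul p W).symm
    _ ≤ ∫ ω, W ω * P[s.indicator 1 | m] ω ∂P := by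
      refine integral_mono_ae (hWi.const_mul p) (integrable_condExp.congr hpull) ?_
      filter_upwards [hp] with ω hω
      simpa [mul_comm] using mul_le_mul_of_nonneg_left hω (hW0 ω)
    _ = ∫ ω, P[W * s.indicator 1 | m] ω ∂P := integral_congr_ae hpull.symm
    _ = ∫ ω in s, W ω ∂P := by rw [integral_condExp hm, hWs, integral_indicator hs]

section filtration

variable {Ω : Type*} {m : MeasurableSpace Ω} {P : Measure Ω} [IsProbabilityMeasure P]
  {ℱ : Filtration ℕ m} {A : ℕ → Set Ω} {n : ℕ}

lemma stronglyMeasurable_pow_hitCount (hA : ∀ t < n, MeasurableSet[ℱ (t + 1)] (A t)) (r : ℝ) :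
    StronglyMeasurable[ℱ n] fun ω => r ^ hitCount A n ω :=
  (measurable_const.pow
    (measurable_hitCount fun t ht => ℱ.mono (Nat.succ_le_of_lt ht) _ (hA t ht))).stronglyMeasurable

lemma integrable_pow_hitCount (hA : ∀ t < n, MeasurableSet[ℱ (t + 1)] (A t)) {r : ℝ}
    (hr0 : 0 ≤ r) (hr1 : r ≤ 1) : Integrable (fun ω => r ^ hitCount A n ω) P :=
  .of_bound ((stronglyMeasurable_pow_hitCount hA r).mono (ℱ.le n)).aestronglyMeasurable 1
    (ae_of_all _ fun ω => by
      rw [Real.norm_of_nonneg (pow_nonneg hr0 _)]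
      exact pow_le_one₀ hr0 hr1)

theorem integral_pow_hitCount_le {r p : ℝ} (hr0 : 0 ≤ r) (hr1 : r ≤ 1) (hp1 : p ≤ 1)
    (hA : ∀ t < n, MeasurableSet[ℱ (t + 1)] (A t))
    (hp : ∀ t < n, ∀ᵐ ω ∂P, p ≤ P[(A t).indicator 1 | ℱ t] ω) :
    ∫ ω, r ^ hitCount A n ω ∂P ≤ (1 - (1 - r) * p) ^ n := by
  induction n with
  | zero => simp [hitCount]
  | succ n ih =>
    have hA' : ∀ t < n, MeasurableSet[ℱ (t + 1)] (A t) := fun t ht => hA t (by omega)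
    have hAn : MeasurableSet (A n) := ℱ.le (n + 1) _ (hA n (by omega))
    have hWi := integrable_pow_hitCount (P := P) hA' hr0 hr1
    have hweight := mul_integral_le_setIntegral_of_le_condExp_indicator (ℱ.le n)
      (stronglyMeasurable_pow_hitCount hA' r) hWi (fun ω => pow_nonneg hr0 _) hAn (hp n (by omega))
    have hsucc : ∫ ω, r ^ hitCount A (n + 1) ω ∂P
        = ∫ ω, r ^ hitCount A n ω ∂P - (1 - r) * ∫ ω in A n, r ^ hitCount A n ω ∂P := by
      simp_rw [pow_hitCount_succ]
      rw [integral_sub hWi ((hWi.indicator hAn).const_mul _), integral_const_mul,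
        integral_indicator hAn]
    calc ∫ ω, r ^ hitCount A (n + 1) ω ∂P
        ≤ (1 - (1 - r) * p) * ∫ ω, r ^ hitCount A n ω ∂P := by
          rw [hsucc]; nlinarith
      _ ≤ (1 - (1 - r) * p) * (1 - (1 - r) * p) ^ n := by
          gcongr
          · nlinarith
          · exact ih hA' fun t ht => hp t (by omega)
      _ = (1 - (1 - r) * p) ^ (n + 1) := (pow_succ' _ _).symm

theorem measure_hitCount_le_le {r p : ℝ} (hr0 : 0 < r) (hr1 : r ≤ 1) (hp1 : p ≤ 1)
    (hA : ∀ t < n, MeasurableSet[ℱ (t + 1)] (A t))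
    (hp : ∀ t < n, ∀ᵐ ω ∂P, p ≤ P[(A t).indicator 1 | ℱ t] ω) (j : ℕ) :
    P {ω | hitCount A n ω ≤ j} ≤ ENNReal.ofReal ((1 - (1 - r) * p) ^ n / r ^ j) := by
  have hmarkov := mul_meas_ge_le_integral_of_nonneg (ae_of_all _ fun ω => pow_nonneg hr0.le _)
    (integrable_pow_hitCount (P := P) hA hr0.le hr1) (r ^ j)
  have hsub : {ω | hitCount A n ω ≤ j} ⊆ {ω | r ^ j ≤ r ^ hitCount A n ω} := fun ω hω =>
    pow_le_pow_of_le_one hr0.le hr1 hω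
  calc P {ω | hitCount A n ω ≤ j} ≤ P {ω | r ^ j ≤ r ^ hitCount A n ω} := measure_mono hsub
    _ = ENNReal.ofReal (P.real {ω | r ^ j ≤ r ^ hitCount A n ω}) :=
      (ofReal_measureReal (measure_ne_top _ _)).symm
    _ ≤ ENNReal.ofReal ((1 - (1 - r) * p) ^ n / r ^ j) := by
      gcongr
      rw [le_div_iff₀' (by positivity)]
      exact hmarkov.trans (integral_pow_hitCount_le hr0.le hr1 hp1 hA hp)

end filtration

lemma three_quarters_pow_div_half_pow_le_exp {j T : ℕ} (hj : (j : ℝ) ≤ T / 4) :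
    (3 / 4 : ℝ) ^ T / (1 / 2) ^ j ≤ Real.exp (-T / 16) := by
  have h34 : (3 / 4 : ℝ) ≤ Real.exp (-1 / 4) := by linarith [Real.add_one_le_exp (-1 / 4)]
  have h2 : (2 : ℝ) ≤ Real.exp (3 / 4) :=
    (Real.log_le_iff_le_exp two_pos).1 (by linarith [Real.log_two_lt_d9])
  calc (3 / 4 : ℝ) ^ T / (1 / 2) ^ j
      = (3 / 4) ^ T * 2 ^ j := by rw [one_div, inv_pow, div_inv_eq_mul]
    _ ≤ Real.exp (-1 / 4) ^ T * Real.exp (3 / 4) ^ j := by gcongr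
    _ = Real.exp (-T / 4 + 3 / 4 * j) := by
      rw [← Real.exp_nat_mul, ← Real.exp_nat_mul, ← Real.exp_add]; ring_nf
    _ ≤ Real.exp (-T / 16) := Real.exp_le_exp.2 (by linarith)

theorem contraction_process_convergence_general
    {Ω : Type*} {m : MeasurableSpace Ω} (P : Measure Ω) [IsProbabilityMeasure P]
    (T : ℕ) (ℱ : Filtration ℕ m) (D : ℕ → Ω → ℝ)
    (hmeas : ∀ t, t ≤ T → StronglyMeasurable[ℱ t] (D t))
    (Dmax η γ : ℝ) (hη : 0 < η) (hγ0 : 0 < γ) (hγ1 : γ < 1)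
    (h0 : ∀ᵐ ω ∂P, D 0 ω ≤ Dmax)
    (hmono : ∀ t, t < T → ∀ᵐ ω ∂P, D (t + 1) ω ≤ D t ω)
    (hcond : ∀ t, t < T → ∀ᵐ ω ∂P, (1 : ℝ) / 2 ≤
      (P[Set.indicator {ω' | D (t + 1) ω' ≤ max ((1 - γ) * D t ω') η}
          (fun _ => (1 : ℝ)) | ℱ t]) ω)
    (hcontract : (1 - γ) ^ (⌈(T : ℝ) / 4⌉₊) * Dmax ≤ η) :
    P {ω | η < D T ω} ≤ ENNReal.ofReal (Real.exp (-(T : ℝ) / 16)) := by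
  set k := ⌈(T : ℝ) / 4⌉₊
  set A := contractionSet D (1 - γ) η
  have hA : ∀ t < T, MeasurableSet[ℱ (t + 1)] (A t) := fun t ht =>
    measurableSet_le (hmeas (t + 1) ht).measurable <| (measurable_const.mul
      ((hmeas t ht.le).mono (ℱ.mono t.le_succ)).measurable).max measurable_const
  have hmono_all : ∀ᵐ ω ∂P, ∀ t < T, D (t + 1) ω ≤ D t ω :=
    (ae_ball_iff (Set.to_countable (Set.Iio T))).2 hmono
  have hfew : {ω | η < D T ω} ≤ᵐ[P] {ω | hitCount A T ω ≤ k - 1} := by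
    filter_upwards [h0, hmono_all] with ω hω0 hωmono hωT
    exact Nat.le_sub_one_of_lt
      (hitCount_contractionSet_lt (by linarith) (by linarith) hη.le hcontract hω0 hωmono hωT)
  have hk : ((k - 1 : ℕ) : ℝ) ≤ T / 4 := calc
    ((k - 1 : ℕ) : ℝ) ≤ ⌊(T : ℝ) / 4⌋₊ := by
      exact_mod_cast Nat.sub_le_iff_le_add.2 (Nat.ceil_le_floor_add_one _)
    _ ≤ T / 4 := Nat.floor_le (by positivity)
  calc P {ω | η < D T ω} ≤ P {ω | hitCount A T ω ≤ k - 1} := measure_mono_ae hfew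
    _ ≤ ENNReal.ofReal ((1 - (1 - 1 / 2) * (1 / 2)) ^ T / (1 / 2) ^ (k - 1)) :=
      measure_hitCount_le_le (by norm_num) (by norm_num) (by norm_num) hA hcond _
    _ = ENNReal.ofReal ((3 / 4) ^ T / (1 / 2) ^ (k - 1)) := by norm_num
    _ ≤ ENNReal.ofReal (Real.exp (-(T : ℝ) / 16)) :=
      ENNReal.ofReal_le_ofReal (three_quarters_pow_div_half_pow_le_exp hk)

/-- Per-point convergence of the non-private evolution algorithm: a nonnegative adapted
process `D_t` that never increases and, with conditional probability at least `1/2` given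
the past, contracts by a factor `(1-γ)` (or drops below `η`), ends below `η` after `T`
iterations except with probability `exp(−T/16)`, provided `(1-γ)^⌈T/4⌉·D ≤ η`. -/
theorem contraction_process_convergence
    {Ω : Type*} {m : MeasurableSpace Ω} (P : Measure Ω) [IsProbabilityMeasure P]
    (T : ℕ) (ℱ : Filtration ℕ m) (D : ℕ → Ω → ℝ)
    (hmeas : ∀ t, t ≤ T → StronglyMeasurable[ℱ t] (D t))
    (hnonneg : ∀ t, t ≤ T → ∀ ω, 0 ≤ D t ω)
    (Dmax η γ : ℝ) (hDmax : 0 < Dmax) (hη : 0 < η) (hγ0 : 0 < γ) (hγ1 : γ < 1)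
    (h0 : ∀ᵐ ω ∂P, D 0 ω ≤ Dmax)
    (hmono : ∀ t, t < T → ∀ᵐ ω ∂P, D (t + 1) ω ≤ D t ω)
    (hcond : ∀ t, t < T → ∀ᵐ ω ∂P, (1 : ℝ) / 2 ≤
      (P[Set.indicator {ω' | D (t + 1) ω' ≤ max ((1 - γ) * D t ω') η}
          (fun _ => (1 : ℝ)) | ℱ t]) ω)
    (hcontract : (1 - γ) ^ (⌈(T : ℝ) / 4⌉₊) * Dmax ≤ η) :
    P {ω | η < D T ω} ≤ ENNReal.ofReal (Real.exp (-(T : ℝ) / 16)) :=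
  contraction_process_convergence_general P T ℱ D hmeas Dmax η γ hη hγ0 hγ1 h0 hmono hcond hcontract
end

section
/- Let σ > 0, H > 0, B > 0, let m ≥ 1 be an integer, let τ ∈ (0, 1), and let c₁, …, c_m be real numbers such that for every j, either c_j = 0 or c_j ≥ B. Let ξ₁, …, ξ_m be independent real random variables each with law gaussianReal 0 (σ²). If H ≥ σ·√(2·log(2m/τ)) and B − H ≥ σ·√(2·log(2m/τ)), then with probability at least 1 − τ the following holds simultaneously for every j ∈ {1,…,m}: c_j + ξ_j > H if and only if c_j ≥ B. -/
open MeasureTheory ProbabilityTheory Real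
open scoped ENNReal NNReal

/-! Put `t = σ √(2 log (2m/τ))`. Since `t ≤ H` and `t ≤ B - H`, a noise value with `|ξ_j| < t`
cannot push a zero count above `H` nor a count `≥ B` down to `H`, so thresholding can fail only
if `|ξ_j| ≥ t` for some `j`. The Gaussian Chernoff bound gives `P(|ξ_j| ≥ t) ≤ 2 exp(-t²/2σ²)`,
and `t` is chosen so that this equals `τ/m`; a union bound over the `m` bins finishes. -/

lemma threshold_iff_of_abs_lt {c ξ t H B : ℝ} (hc : c = 0 ∨ B ≤ c) (hH : t ≤ H)
    (hBH : t ≤ B - H) (hξ : |ξ| < t) : H < c + ξ ↔ B ≤ c := by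
  have hξ' := abs_lt.mp hξ
  rcases hc with rfl | hBc
  · have ht : 0 < t := (abs_nonneg ξ).trans_lt hξ
    constructor <;> intro <;> linarith
  · exact iff_of_true (by linarith) hBc

lemma exp_neg_sq_mul_sqrt_two_log_div_eq_inv {σ x : ℝ} (hσ : σ ≠ 0) (hx : 1 ≤ x) :
    exp (-(σ * √(2 * log x)) ^ 2 / (2 * σ ^ 2)) = x⁻¹ := by
  have hlog : 0 ≤ 2 * log x := mul_nonneg zero_le_two (log_nonneg hx)
  rw [mul_pow, sq_sqrt hlog, show -(σ ^ 2 * (2 * log x)) / (2 * σ ^ 2) = -log x by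
    field_simp, exp_neg, exp_log (by linarith)]

section

variable {Ω : Type*} {mΩ : MeasurableSpace Ω} {μ : Measure Ω}

lemma MeasureTheory.ofReal_one_sub_le_measure_of_measure_compl_le [IsProbabilityMeasure μ]
    {s : Set Ω} {τ : ℝ} (hτ : 0 ≤ τ) (h : μ sᶜ ≤ ENNReal.ofReal τ) :
    ENNReal.ofReal (1 - τ) ≤ μ s := by
  have hsplit : 1 ≤ μ s + ENNReal.ofReal τ := by
    simpa using (measure_univ_le_add_compl s (μ := μ)).trans (add_le_add_right h _)
  rw [ENNReal.ofReal_sub 1 hτ, ENNReal.ofReal_one]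
  exact tsub_le_iff_right.mpr hsplit

lemma ProbabilityTheory.hasSubgaussianMGF_id_gaussianReal (v : ℝ≥0) :
    HasSubgaussianMGF id v (gaussianReal 0 v) where
  integrable_exp_mul := integrable_exp_mul_gaussianReal
  mgf_le t := by simp [mgf_id_gaussianReal]

lemma ProbabilityTheory.HasSubgaussianMGF.of_map_eq_gaussianReal {X : Ω → ℝ} {v : ℝ≥0}
    (hX : μ.map X = gaussianReal 0 v) :
    HasSubgaussianMGF X v μ := by
  have hXm : AEMeasurable X μ := aemeasurable_of_map_neZero (by rw [hX]; infer_instance)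
  rw [← HasSubgaussianMGF.id_map_iff hXm, hX]
  exact hasSubgaussianMGF_id_gaussianReal v

lemma ProbabilityTheory.HasSubgaussianMGF.measure_abs_ge_le [IsFiniteMeasure μ] {X : Ω → ℝ}
    {c : ℝ≥0} (h : HasSubgaussianMGF X c μ) {ε : ℝ} (hε : 0 ≤ ε) :
    μ {ω | ε ≤ |X ω|} ≤ ENNReal.ofReal (2 * exp (-ε ^ 2 / (2 * c))) := by
  have hsub : {ω | ε ≤ |X ω|} ⊆ {ω | ε ≤ X ω} ∪ {ω | ε ≤ (-X) ω} :=
    fun ω (hω : ε ≤ |X ω|) => (le_abs.mp hω :)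
  calc μ {ω | ε ≤ |X ω|} ≤ μ {ω | ε ≤ X ω} + μ {ω | ε ≤ (-X) ω} :=
        (measure_mono hsub).trans (measure_union_le _ _)
    _ = ENNReal.ofReal (μ.real {ω | ε ≤ X ω} + μ.real {ω | ε ≤ (-X) ω}) := by
        rw [ENNReal.ofReal_add measureReal_nonneg measureReal_nonneg, ofReal_measureReal,
          ofReal_measureReal]
    _ ≤ ENNReal.ofReal (2 * exp (-ε ^ 2 / (2 * c))) := by
        gcongr
        linarith [h.measure_ge_le hε, h.neg.measure_ge_le hε]

end

theorem noisy_threshold_exact_general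
    {Ω : Type*} {mΩ : MeasurableSpace Ω} (P : Measure Ω) [IsProbabilityMeasure P]
    (σ H B : ℝ) (hσ : 0 < σ)
    (m : ℕ) (hm : 1 ≤ m) (τ : ℝ) (hτ0 : 0 < τ) (hτ1 : τ < 1)
    (c : Fin m → ℝ) (hc : ∀ j, c j = 0 ∨ B ≤ c j)
    (ξ : Fin m → Ω → ℝ)
    (hlaw : ∀ j, Measure.map (ξ j) P = gaussianReal 0 ⟨σ ^ 2, sq_nonneg σ⟩)
    (hH' : σ * Real.sqrt (2 * Real.log (2 * m / τ)) ≤ H)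
    (hBH : σ * Real.sqrt (2 * Real.log (2 * m / τ)) ≤ B - H) :
    ENNReal.ofReal (1 - τ) ≤ P {ω | ∀ j : Fin m, (H < c j + ξ j ω ↔ B ≤ c j)} := by
  set t := σ * √(2 * log (2 * m / τ))
  have hm' : (1 : ℝ) ≤ m := by exact_mod_cast hm
  have hx : 1 ≤ 2 * m / τ := by rw [le_div_iff₀ hτ0]; linarith
  have htail (j : Fin m) : P {ω | t ≤ |ξ j ω|} ≤ ENNReal.ofReal (τ / m) := by
    have hchernoff := (HasSubgaussianMGF.of_map_eq_gaussianReal (hlaw j)).measure_abs_ge_le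
      (ε := t) (by positivity)
    have hexp : exp (-t ^ 2 / (2 * σ ^ 2)) = (2 * m / τ)⁻¹ :=
      exp_neg_sq_mul_sqrt_two_log_div_eq_inv hσ.ne' hx
    change _ ≤ ENNReal.ofReal (2 * exp (-t ^ 2 / (2 * σ ^ 2))) at hchernoff
    rwa [hexp, inv_div, show 2 * (τ / (2 * m)) = τ / m by field_simp] at hchernoff
  apply ofReal_one_sub_le_measure_of_measure_compl_le hτ0.le
  calc P {ω | ∀ j, (H < c j + ξ j ω ↔ B ≤ c j)}ᶜ
        ≤ P (⋃ j, {ω | t ≤ |ξ j ω|}) := by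
        refine measure_mono fun ω hω => ?_
        obtain ⟨j, hj⟩ := not_forall.mp hω
        exact Set.mem_iUnion.mpr
          ⟨j, not_lt.mp fun hξ => hj (threshold_iff_of_abs_lt (hc j) hH' hBH hξ)⟩
    _ ≤ ∑ j, P {ω | t ≤ |ξ j ω|} := measure_iUnion_fintype_le P _
    _ ≤ ∑ _ : Fin m, ENNReal.ofReal (τ / m) := Finset.sum_le_sum fun j _ => htail j
    _ = ENNReal.ofReal τ := by
        rw [Finset.sum_const, Finset.card_univ, Fintype.card_fin, nsmul_eq_mul,
          ← ENNReal.ofReal_natCast, ← ENNReal.ofReal_mul (Nat.cast_nonneg m),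
          mul_div_cancel₀ τ (by positivity)]

/-- Noisy thresholding in Private Evolution under the multiplicity assumption: if every
true count `c_j` is either `0` or at least `B`, and both `H` and `B − H` dominate the
uniform Gaussian noise bound `σ·√(2·log(2m/τ))`, then with probability at least `1 − τ`,
after adding independent `N(0, σ²)` noise and thresholding at `H`, exactly the bins with
true count at least `B` survive. -/
theorem noisy_threshold_exact
    {Ω : Type*} {mΩ : MeasurableSpace Ω} (P : Measure Ω) [IsProbabilityMeasure P]
    (σ H B : ℝ) (hσ : 0 < σ) (hH : 0 < H) (hB : 0 < B)
    (m : ℕ) (hm : 1 ≤ m) (τ : ℝ) (hτ0 : 0 < τ) (hτ1 : τ < 1)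
    (c : Fin m → ℝ) (hc : ∀ j, c j = 0 ∨ B ≤ c j)
    (ξ : Fin m → Ω → ℝ)
    (hindep : iIndepFun ξ P)
    (hlaw : ∀ j, Measure.map (ξ j) P = gaussianReal 0 ⟨σ ^ 2, sq_nonneg σ⟩)
    (hH' : σ * Real.sqrt (2 * Real.log (2 * m / τ)) ≤ H)
    (hBH : σ * Real.sqrt (2 * Real.log (2 * m / τ)) ≤ B - H) :
    ENNReal.ofReal (1 - τ) ≤ P {ω | ∀ j : Fin m, (H < c j + ξ j ω ↔ B ≤ c j)} :=
  noisy_threshold_exact_general (mΩ := mΩ) P σ H B hσ m hm τ hτ0 hτ1 c hc ξ hlaw hH' hBH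
end
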